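/- Let 0 < a² < 1, c, b ∈ ℝ, and define g(u) = (a/(1−a²))·√(u² − (a·u + c)²) + (c/(1−a²)^{3/2})·ln(√(1−a²)·u − a·c/√(1−a²) + √(u² − (a·u + c)²)) + b on an interval where u² − (a·u+c)² > 0 and the logarithm argument is positive. Then g′(u) = (a·u + c)/√(u² − (a·u + c)²). -/

import Mathlib

/-!
With `r = √(u² − (au+c)²)` and `s = √(1−a²)`, the derivative of `u² − (au+c)²` is
`2((1−a²)u − ac) = 2s(su − ac/s)`. Hence the argument `L = su − ac/s + r` of the logarithm
satisfies `L' = s + s(su − ac/s)/r = sL/r`, so `(log L)' = s/r`. Since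
`(1−a²)^{3/2} = (1−a²)s`, the derivative of `g` is
`(a((1−a²)u − ac) + c(1−a²)) / ((1−a²) r) = (au + c)/r`.
-/

open Real

theorem hasDerivAt_sqrt_sq_sub_sq {a c u : ℝ} (hQ : u ^ 2 - (a * u + c) ^ 2 ≠ 0) :
    HasDerivAt (fun x => √(x ^ 2 - (a * x + c) ^ 2))
      (((1 - a ^ 2) * u - a * c) / √(u ^ 2 - (a * u + c) ^ 2)) u := by
  have hlin : HasDerivAt (fun x => a * x + c) a u := by
    simpa using ((hasDerivAt_id u).const_mul a).add_const c
  have hquad : HasDerivAt (fun x => x ^ 2 - (a * x + c) ^ 2)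
      (2 * ((1 - a ^ 2) * u - a * c)) u :=
    ((hasDerivAt_pow 2 u).sub (hlin.pow 2)).congr_deriv (by ring)
  refine (hquad.sqrt hQ).congr_deriv ?_
  field_simp

theorem hasDerivAt_log_linear_add_sqrt_sq_sub_sq {a c s u : ℝ} (hs : s ^ 2 = 1 - a ^ 2)
    (hs0 : s ≠ 0) (hQ : 0 < u ^ 2 - (a * u + c) ^ 2)
    (hL : s * u - a * c / s + √(u ^ 2 - (a * u + c) ^ 2) ≠ 0) :
    HasDerivAt (fun x => log (s * x - a * c / s + √(x ^ 2 - (a * x + c) ^ 2)))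
      (s / √(u ^ 2 - (a * u + c) ^ 2)) u := by
  set r := √(u ^ 2 - (a * u + c) ^ 2) with hr_def
  have hr : r ≠ 0 := (sqrt_pos.mpr hQ).ne'
  have hL' : HasDerivAt (fun x => s * x - a * c / s + √(x ^ 2 - (a * x + c) ^ 2))
      (s * (s * u - a * c / s + r) / r) u := by
    refine ((((hasDerivAt_id u).const_mul s).sub_const (a * c / s)).add
      (hasDerivAt_sqrt_sq_sub_sq hQ.ne')).congr_deriv ?_
    rw [← hr_def]
    field_simp
    linear_combination (-u) * hs
  refine (hL'.log hL).congr_deriv ?_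
  show s * (s * u - a * c / s + r) / r / (s * u - a * c / s + r) = s / r
  rw [mul_div_right_comm, mul_div_cancel_right₀ _ hL]

theorem rpow_three_halves_eq_mul_sqrt {x : ℝ} (hx : 0 ≤ x) : x ^ ((3 : ℝ) / 2) = x * √x := by
  rw [rpow_div_two_eq_sqrt 3 hx]
  norm_cast
  linear_combination √x * sq_sqrt hx

theorem stmt_14_general (a c b : ℝ) (ha1 : a ^ 2 < 1) (g : ℝ → ℝ)
    (hg : ∀ u : ℝ, g u =
      a / (1 - a ^ 2) * Real.sqrt (u ^ 2 - (a * u + c) ^ 2) +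
      c / (1 - a ^ 2) ^ ((3 : ℝ) / 2) *
        Real.log (Real.sqrt (1 - a ^ 2) * u - a * c / Real.sqrt (1 - a ^ 2) +
          Real.sqrt (u ^ 2 - (a * u + c) ^ 2)) + b) :
    ∀ u : ℝ, 0 < u → 0 < u ^ 2 - (a * u + c) ^ 2 →
      0 < Real.sqrt (1 - a ^ 2) * u - a * c / Real.sqrt (1 - a ^ 2) +
          Real.sqrt (u ^ 2 - (a * u + c) ^ 2) →
      HasDerivAt g ((a * u + c) / Real.sqrt (u ^ 2 - (a * u + c) ^ 2)) u := by
  intro u _ hQ hL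
  have h1 : 0 < 1 - a ^ 2 := by linarith
  have hs : 0 < √(1 - a ^ 2) := sqrt_pos.mpr h1
  have hr : 0 < √(u ^ 2 - (a * u + c) ^ 2) := sqrt_pos.mpr hQ
  rw [funext hg, rpow_three_halves_eq_mul_sqrt h1.le]
  refine ((((hasDerivAt_sqrt_sq_sub_sq hQ.ne').const_mul _).add
    ((hasDerivAt_log_linear_add_sqrt_sq_sub_sq (sq_sqrt h1.le) hs.ne' hQ hL.ne').const_mul
      _)).add_const b).congr_deriv ?_
  field_simp
  ring

/-- The explicit meridian of a marginally trapped meridian surface M″_m: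
g(u) = (a/(1−a²))√(u²−(au+c)²) + (c/(1−a²)^{3/2})·ln(√(1−a²)u − ac/√(1−a²) + √(u²−(au+c)²)) + b
has derivative g′(u) = (au+c)/√(u²−(au+c)²). -/
theorem stmt_14 (a c b : ℝ) (ha : 0 < a ^ 2) (ha1 : a ^ 2 < 1) (g : ℝ → ℝ)
    (hg : ∀ u : ℝ, g u =
      a / (1 - a ^ 2) * Real.sqrt (u ^ 2 - (a * u + c) ^ 2) +
      c / (1 - a ^ 2) ^ ((3 : ℝ) / 2) *
        Real.log (Real.sqrt (1 - a ^ 2) * u - a * c / Real.sqrt (1 - a ^ 2) +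
          Real.sqrt (u ^ 2 - (a * u + c) ^ 2)) + b) :
    ∀ u : ℝ, 0 < u → 0 < u ^ 2 - (a * u + c) ^ 2 →
      0 < Real.sqrt (1 - a ^ 2) * u - a * c / Real.sqrt (1 - a ^ 2) +
          Real.sqrt (u ^ 2 - (a * u + c) ^ 2) →
      HasDerivAt g ((a * u + c) / Real.sqrt (u ^ 2 - (a * u + c) ^ 2)) u :=
  stmt_14_general a c b ha1 g hg
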